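/- Let V be a complete Souslin scheme that covers flesh(V), with |flesh(V)| ≤ 2^{ℵ₀}, and suppose that for every x ∈ flesh(V) the set branches_V(x) is a dense-in-itself subspace of the Baire space. Then V has a selector. -/

import Mathlib

open Set Topology

namespace PiSpacePaper

/-- The restriction `p↾n` of `p : ℕ → ℕ`, as a list of length `n`. -/
def restrictSeq (p : ℕ → ℕ) (n : ℕ) : List ℕ := (List.range n).map p

/-- The basic clopen set `S_a` of the Baire space. -/
def cyl (a : List ℕ) : Set (ℕ → ℕ) := {p | restrictSeq p a.length = a}

/-- The fruit `⋂ n, V (p↾n)` of a branch `p` in a Souslin scheme `V`. -/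
def fruit {X : Type*} (V : List ℕ → Set X) (p : ℕ → ℕ) : Set X :=
  ⋂ n : ℕ, V (restrictSeq p n)

/-- A Souslin scheme `V` covers the set `s`. -/
def Covers {X : Type*} (V : List ℕ → Set X) (s : Set X) : Prop :=
  V [] = s ∧ ∀ a : List ℕ, V a = ⋃ n : ℕ, V (a ++ [n])

/-- A Souslin scheme `V` partitions the set `s`. -/
def Partitions {X : Type*} (V : List ℕ → Set X) (s : Set X) : Prop :=
  Covers V s ∧ ∀ (a : List ℕ) (n m : ℕ), n ≠ m → V (a ++ [n]) ∩ V (a ++ [m]) = ∅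

/-- A Souslin scheme is complete iff all fruits are nonempty. -/
def Complete {X : Type*} (V : List ℕ → Set X) : Prop :=
  ∀ p : ℕ → ℕ, (fruit V p).Nonempty

/-- A Souslin scheme has strict branches iff every fruit is a singleton. -/
def StrictBranches {X : Type*} (V : List ℕ → Set X) : Prop :=
  ∀ p : ℕ → ℕ, ∃ x : X, fruit V p = {x}

/-- A Souslin scheme is open iff all its members are open sets. -/
def OpenScheme {X : Type*} [TopologicalSpace X] (V : List ℕ → Set X) : Prop :=
  ∀ a : List ℕ, IsOpen (V a)

/-- `flesh V = ⋃ a, V a`. -/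
def flesh {X : Type*} (V : List ℕ → Set X) : Set X := ⋃ a : List ℕ, V a

/-- `branches V x = {q ∈ ℕ^ℕ : x ∈ fruit V q}`. -/
def branches {X : Type*} (V : List ℕ → Set X) (x : X) : Set (ℕ → ℕ) :=
  {q | x ∈ fruit V q}

/-- A family `γ` of subsets is a π-net for a space: all members are nonempty and every
nonempty open set contains a member. -/
def IsPiNet {X : Type*} [TopologicalSpace X] (γ : Set (Set X)) : Prop :=
  (∀ G ∈ γ, G.Nonempty) ∧
  ∀ U : Set X, IsOpen U → U.Nonempty → ∃ G ∈ γ, G ⊆ U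

/-- A family `γ` of subsets is a π-base for a space: all members are nonempty open sets
and every nonempty open set contains a member. -/
def IsPiBase {X : Type*} [TopologicalSpace X] (γ : Set (Set X)) : Prop :=
  (∀ G ∈ γ, IsOpen G ∧ G.Nonempty) ∧
  ∀ U : Set X, IsOpen U → U.Nonempty → ∃ G ∈ γ, G ⊆ U

/-- A π-space: there is an open Souslin scheme that partitions the space, has strict
branches, and whose family of members is a π-base. -/
def IsPiSpace (X : Type*) [TopologicalSpace X] : Prop :=
  ∃ V : List ℕ → Set X, OpenScheme V ∧ Partitions V Set.univ ∧ StrictBranches V ∧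
    IsPiBase {S : Set X | ∃ a : List ℕ, S = V a}

/-- A Lusin π-base for a space. -/
def IsLusinPiBase {X : Type*} [TopologicalSpace X] (V : List ℕ → Set X) : Prop :=
  OpenScheme V ∧ Partitions V Set.univ ∧ StrictBranches V ∧
  ∀ (x : X) (U : Set X), IsOpen U → x ∈ U →
    ∃ (a : List ℕ) (n : ℕ), x ∈ V a ∧ (⋃ i : ℕ, ⋃ _ : n ≤ i, V (a ++ [i])) ⊆ U

/-- A map is quasi-open iff the image of every nonempty open set has nonempty interior. -/
def IsQuasiOpen {X Y : Type*} [TopologicalSpace X] [TopologicalSpace Y] (f : X → Y) : Prop :=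
  ∀ U : Set X, IsOpen U → U.Nonempty → (interior (f '' U)).Nonempty

/-- A π-net Souslin scheme on a space `X`: for every finite sequence `a`, the family
`{V b : b ⊒ a}` is a π-net for the subspace `V a` of `X` (whose nonempty open sets are
exactly the nonempty sets `U ∩ V a` with `U` open in `X`). -/
def IsPiNetScheme {X : Type*} [TopologicalSpace X] (V : List ℕ → Set X) : Prop :=
  ∀ a : List ℕ,
    (∀ b : List ℕ, a <+: b → (V b).Nonempty) ∧
    ∀ U : Set X, IsOpen U → (U ∩ V a).Nonempty → ∃ b : List ℕ, a <+: b ∧ V b ⊆ U ∩ V a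

/-- A π-base Souslin scheme on a space is an open π-net Souslin scheme. -/
def IsPiBaseScheme {X : Type*} [TopologicalSpace X] (V : List ℕ → Set X) : Prop :=
  OpenScheme V ∧ IsPiNetScheme V

/-- A selector on a Souslin scheme `V`: a surjection of the Baire space onto `flesh V`
such that every fiber `f⁻¹(x)` is a dense subset of the subspace `branches V x` of the
Baire space. -/
def IsSelector {X : Type*} (V : List ℕ → Set X) (f : (ℕ → ℕ) → X) : Prop :=
  Set.range f = flesh V ∧
  ∀ x ∈ flesh V, f ⁻¹' {x} ⊆ branches V x ∧ branches V x ⊆ closure (f ⁻¹' {x})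

/-- The topology `σ_{τ,f}` on the Baire space, generated by the subbase consisting of the
`τ`-preimages under `f` together with the basic sets `S_a`. -/
def sigmaTop {X : Type*} [TopologicalSpace X] (f : (ℕ → ℕ) → X) :
    TopologicalSpace (ℕ → ℕ) :=
  TopologicalSpace.generateFrom
    ({S : Set (ℕ → ℕ) | ∃ U : Set X, IsOpen U ∧ S = f ⁻¹' U} ∪
      {S : Set (ℕ → ℕ) | ∃ a : List ℕ, S = cyl a})

/-- The Souslin scheme `V^g`, where `V^g_a = V_{g ∘ a}`. -/
def schemeComp {X : Type*} (V : List ℕ → Set X) (g : ℕ → ℕ) : List ℕ → Set X :=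
  fun a => V (a.map g)

/-- A subset of the Baire space is dense-in-itself iff it has no isolated points. -/
def DenseInItself (B : Set (ℕ → ℕ)) : Prop :=
  ∀ q ∈ B, q ∈ closure (B \ {q})

/-- `X` is a continuous open image of a π-space. -/
def IsContinuousOpenImageOfPiSpace (X : Type) [TopologicalSpace X] : Prop :=
  ∃ (Y : Type) (_ : TopologicalSpace Y) (f : Y → X),
    IsPiSpace Y ∧ Continuous f ∧ IsOpenMap f ∧ Function.Surjective f

/-- The topology `τ_N` on the Baire space generated by the sets `U \ A` with `U` open in
the Baire space and `A` nowhere dense in the Baire space. -/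
def tauN : TopologicalSpace (ℕ → ℕ) :=
  TopologicalSpace.generateFrom
    {S : Set (ℕ → ℕ) | ∃ U A : Set (ℕ → ℕ), IsOpen U ∧ IsNowhereDense A ∧ S = U \ A}

/-!
Index the pairs `(x, a)` with `x ∈ flesh V` and `S_a ∩ branches_V(x) ≠ ∅`; there are at most
`𝔠` of them. Each such `S_a ∩ branches_V(x)` is a nonempty perfect subset of the Baire space
(closed, and dense-in-itself because `S_a` is open), hence has `𝔠` points, so a transfinite
recursion picks pairwise distinct points `F(x, a) ∈ S_a ∩ branches_V(x)`. Sending `F(x, a)` to `x`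
and every other branch `p` to a point of its (nonempty) fruit gives a selector: the fiber over
`x` meets every basic open set `S_a` that meets `branches_V(x)`.
-/

end PiSpacePaper

open Cardinal

universe u

theorem Cardinal.exists_injective_forall_mem_of_mk_le {ι α : Type u} {κ : Cardinal}
    (S : ι → Set α) (hι : #ι ≤ κ) (hS : ∀ i, κ ≤ #(S i)) :
    ∃ F : ι → α, Function.Injective F ∧ ∀ i, F i ∈ S i := by
  -- Recurse along a well-order of `ι` of type `(#ι).ord`: each initial segment has fewer than
  -- `κ` elements, so some point of `S i` is still unused.
  obtain ⟨r, _, hr⟩ := exists_ord_eq ι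
  have hpred : ∀ i, #{j // r j i} < #(S i) := fun i => by
    rw [← Ordinal.card_typein]
    exact ((card_typein_lt i hr).trans_le hι).trans_le (hS i)
  have hfresh : ∀ i (G : ∀ j, r j i → α),
      ∃ p ∈ S i, p ∉ range fun j : {j // r j i} => G j.1 j.2 := fun i G =>
    not_subset.1 fun hsub => (hpred i).not_ge ((mk_le_mk_of_subset hsub).trans mk_range_le)
  choose pick hpick_mem hpick_fresh using hfresh
  let F : ι → α := IsWellFounded.wf.fix fun i G => pick i G
  have hF : ∀ i, F i = pick i fun j _ => F j := IsWellFounded.wf.fix_eq _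
  have hF_fresh : ∀ i j, r j i → F j ≠ F i := fun i j hji hij =>
    hpick_fresh i (fun j _ => F j) ⟨⟨j, hji⟩, hij.trans (hF i)⟩
  refine ⟨F, fun i j hij => ?_, fun i => hF i ▸ hpick_mem i _⟩
  rcases trichotomous_of r i j with h | h | h
  · exact absurd hij (hF_fresh j i h)
  · exact h
  · exact absurd hij.symm (hF_fresh i j h)

theorem Perfect.continuum_le_mk {α : Type*} [TopologicalSpace α]
    [TopologicalSpace.IsCompletelyMetrizableSpace α] {C : Set α} (hC : Perfect C)
    (hne : C.Nonempty) : 𝔠 ≤ #C := by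
  let := TopologicalSpace.upgradeIsCompletelyMetrizable α
  obtain ⟨f, hfC, -, hf⟩ := hC.exists_nat_bool_injection hne
  have := lift_mk_le_lift_mk_of_injective (f := codRestrict f C fun y => hfC ⟨y, rfl⟩)
    (hf.codRestrict _)
  simpa using this

namespace PiSpacePaper

lemma restrictSeq_length (p : ℕ → ℕ) (n : ℕ) : (restrictSeq p n).length = n := by
  simp [restrictSeq]

lemma restrictSeq_succ (p : ℕ → ℕ) (n : ℕ) :
    restrictSeq p (n + 1) = restrictSeq p n ++ [p n] := by
  simp [restrictSeq, List.range_succ]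

lemma restrictSeq_eq_restrictSeq_iff {p q : ℕ → ℕ} {n : ℕ} :
    restrictSeq p n = restrictSeq q n ↔ p ∈ PiNat.cylinder q n := by
  simp [restrictSeq, List.map_inj_left, PiNat.mem_cylinder_iff]

lemma mem_cyl_restrictSeq_iff {p q : ℕ → ℕ} {n : ℕ} :
    p ∈ cyl (restrictSeq q n) ↔ restrictSeq p n = restrictSeq q n := by
  rw [cyl, mem_ofPred_eq, restrictSeq_length]

lemma isOpen_setOf_restrictSeq_mem (s : Set (List ℕ)) (n : ℕ) :
    IsOpen {q : ℕ → ℕ | restrictSeq q n ∈ s} := by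
  refine isOpen_iff_mem_nhds.2 fun q hq => Filter.mem_of_superset
    ((PiNat.isOpen_cylinder _ q n).mem_nhds (PiNat.self_mem_cylinder q n)) fun p hp => ?_
  rwa [mem_ofPred_eq, restrictSeq_eq_restrictSeq_iff.2 hp]

lemma isClosed_setOf_restrictSeq_mem (s : Set (List ℕ)) (n : ℕ) :
    IsClosed {q : ℕ → ℕ | restrictSeq q n ∈ s} :=
  isOpen_compl_iff.1 (isOpen_setOf_restrictSeq_mem sᶜ n)

lemma isOpen_cyl (a : List ℕ) : IsOpen (cyl a) :=
  isOpen_setOf_restrictSeq_mem {a} a.length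

lemma isClosed_cyl (a : List ℕ) : IsClosed (cyl a) :=
  isClosed_setOf_restrictSeq_mem {a} a.length

lemma mem_closure_of_forall_restrictSeq {s : Set (ℕ → ℕ)} {q : ℕ → ℕ}
    (h : ∀ n, ∃ p ∈ s, restrictSeq p n = restrictSeq q n) : q ∈ closure s := by
  refine (PiNat.isTopologicalBasis_cylinders _).mem_closure_iff.2 ?_
  rintro _ ⟨y, n, rfl⟩ hq
  obtain ⟨p, hps, hpq⟩ := h n
  rw [← PiNat.mem_cylinder_iff_eq.1 hq]
  exact ⟨p, restrictSeq_eq_restrictSeq_iff.1 hpq, hps⟩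

lemma exists_forall_restrictSeq {P : List ℕ → Prop} (h₀ : P [])
    (hstep : ∀ a, P a → ∃ n, P (a ++ [n])) : ∃ q : ℕ → ℕ, ∀ n, P (restrictSeq q n) := by
  choose! next hnext using hstep
  let a : ℕ → List ℕ := fun n => Nat.rec [] (fun _ b => b ++ [next b]) n
  have ha : ∀ n, P (a n) := fun n => Nat.rec h₀ (fun n ih => hnext _ ih) n
  have hres : ∀ n, restrictSeq (fun k => next (a k)) n = a n := fun n => by
    induction n with
    | zero => rfl
    | succ n ih => rw [restrictSeq_succ, ih]
  exact ⟨fun k => next (a k), fun n => hres n ▸ ha n⟩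

section Branches

variable {X : Type*} {V : List ℕ → Set X}

lemma mem_branches_iff {x : X} {q : ℕ → ℕ} :
    q ∈ branches V x ↔ ∀ n, x ∈ V (restrictSeq q n) := by
  simp [branches, fruit]

lemma isClosed_branches (V : List ℕ → Set X) (x : X) : IsClosed (branches V x) := by
  have : branches V x = ⋂ n, {q | restrictSeq q n ∈ {a | x ∈ V a}} := by
    ext q
    simp [mem_branches_iff]
  rw [this]
  exact isClosed_iInter fun n => isClosed_setOf_restrictSeq_mem _ n

lemma branches_nonempty_of_covers {s : Set X} (hcov : Covers V s) {x : X} (hx : x ∈ s) :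
    (branches V x).Nonempty := by
  obtain ⟨q, hq⟩ := exists_forall_restrictSeq (P := fun a => x ∈ V a) (hcov.1 ▸ hx)
    fun a ha => mem_iUnion.1 (hcov.2 a ▸ ha)
  exact ⟨q, mem_branches_iff.2 hq⟩

lemma DenseInItself.preperfect {B : Set (ℕ → ℕ)} (h : DenseInItself B) : Preperfect B :=
  fun q hq => by
    rw [accPt_principal_iff_clusterPt, ← mem_closure_iff_clusterPt]
    exact h q hq

lemma continuum_le_mk_cyl_inter_branches {x : X} (hx : DenseInItself (branches V x))
    {a : List ℕ} (hne : (cyl a ∩ branches V x).Nonempty) : 𝔠 ≤ #↥(cyl a ∩ branches V x) :=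
  Perfect.continuum_le_mk
    ⟨(isClosed_cyl a).inter (isClosed_branches V x), hx.preperfect.open_inter (isOpen_cyl a)⟩ hne

def branchCylinders (V : List ℕ → Set X) : Set (flesh V × List ℕ) :=
  {i | (cyl i.2 ∩ branches V (i.1 : X)).Nonempty}

lemma mk_branchCylinders_le (hcard : #(flesh V) ≤ 𝔠) : #(branchCylinders V) ≤ 𝔠 :=
  calc #(branchCylinders V) ≤ #(flesh V × List ℕ) := mk_subtype_le _
    _ = lift #(flesh V) * lift #(List ℕ) := mk_prod _ _
    _ ≤ 𝔠 * 𝔠 := mul_le_mul' (lift_le_continuum.2 hcard) (by simp [aleph0_le_continuum])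
    _ = 𝔠 := mul_eq_self aleph0_le_continuum

theorem isSelector_extend (hcomp : Complete V) (hcov : Covers V (flesh V))
    {F : branchCylinders V → ℕ → ℕ} (hF : Function.Injective F)
    (hF_mem : ∀ i, F i ∈ cyl i.1.2 ∩ branches V i.1.1) :
    IsSelector V (Function.extend F (fun i => (i.1.1 : X)) fun p => (hcomp p).some) := by
  set f := Function.extend F (fun i => (i.1.1 : X)) fun p => (hcomp p).some
  have hf_F : ∀ i, f (F i) = i.1.1 := hF.extend_apply _ _
  have hf_branches : ∀ p, p ∈ branches V (f p) := fun p => by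
    by_cases hp : ∃ i, F i = p
    · obtain ⟨i, rfl⟩ := hp
      exact hf_F i ▸ (hF_mem i).2
    · rw [show f p = (hcomp p).some from Function.extend_apply' _ _ _ hp]
      exact (hcomp p).some_mem
  have hF_fiber : ∀ (x : flesh V) q, q ∈ branches V x → ∀ n,
      ∃ p ∈ f ⁻¹' {(x : X)}, restrictSeq p n = restrictSeq q n := fun x q hq n =>
    let i : branchCylinders V := ⟨(x, restrictSeq q n), q, mem_cyl_restrictSeq_iff.2 rfl, hq⟩
    ⟨F i, hf_F i, mem_cyl_restrictSeq_iff.1 (hF_mem i).1⟩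
  refine ⟨Subset.antisymm ?_ fun x hx => ?_, fun x hx => ⟨fun p hp => ?_, fun q hq => ?_⟩⟩
  · rintro _ ⟨p, rfl⟩
    exact hcov.1 ▸ mem_branches_iff.1 (hf_branches p) 0
  · obtain ⟨p, hp, -⟩ := hF_fiber ⟨x, hx⟩ _ (branches_nonempty_of_covers hcov hx).some_mem 0
    exact ⟨p, hp⟩
  · exact (show f p = x from hp) ▸ hf_branches p
  · exact mem_closure_of_forall_restrictSeq (hF_fiber ⟨x, hx⟩ q hq)

end Branches

/-- A complete Souslin scheme covering its flesh, with flesh of cardinality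
at most the continuum and all branch sets dense-in-themselves, has a selector. -/
theorem statement16 {X : Type} (V : List ℕ → Set X) (hcomp : Complete V)
    (hcov : Covers V (flesh V)) (hcard : Cardinal.mk (flesh V) ≤ Cardinal.continuum)
    (hdense : ∀ x ∈ flesh V, DenseInItself (branches V x)) :
    ∃ f : (ℕ → ℕ) → X, IsSelector V f := by
  obtain ⟨F, hF, hF_mem⟩ := Cardinal.exists_injective_forall_mem_of_mk_le
    (fun i : branchCylinders V => cyl i.1.2 ∩ branches V i.1.1) (mk_branchCylinders_le hcard)
    fun i => continuum_le_mk_cyl_inter_branches (hdense _ i.1.1.2) i.2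
  exact ⟨_, isSelector_extend hcomp hcov hF hF_mem⟩
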